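/- arXiv:1511.03186 — 7 statements merged into one kernel-verified Lean document; each statement's English description precedes it below -/
import Mathlib

section
/- Let p(x) = ∏_{i=1}^n (x − λ_i) with n ≥ 2 and real roots λ_1 ≥ λ_2 ≥ … ≥ λ_n. Let x^0 > λ_1 and define the Newton iterates x^{t+1} = x^t − p(x^t)/p'(x^t). Then x^t > λ_1 for every t ≥ 0 (so the iteration is well defined), and x^t − λ_1 ≤ (1 − 1/n)^t (x^0 − λ_1) for all t; in particular, for every ε ∈ (0,1) and every integer t ≥ n·ln((x^0 − λ_1)/ε), one has 0 ≤ x^t − λ_1 ≤ ε. -/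
/-!
Write `d_k = c - λ_k > 0` for the distances from an iterate `c > λ_1` to the roots. The logarithmic
derivative of `p` is `∑ 1 / d_k`, so the Newton step is `p(c) / p'(c) = (∑ 1 / d_k)⁻¹`. Since
`n ≥ 2`, the sum strictly exceeds `1 / d_1`, so the step is shorter than `d_1` and the iterate stays
above `λ_1`. Since `d_1` is the smallest distance, the sum is at most `n / d_1`, so the step is at
least `d_1 / n`, which contracts `d_1` by the factor `1 - 1/n`. The `ε`-bound follows from
`1 - 1/n ≤ exp (-1/n)`.
-/

open Finset Real

noncomputable def newtonMap (f : ℝ → ℝ) (x : ℝ) : ℝ := x - f x / deriv f x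

section NewtonStep

variable {ι : Type*} [Fintype ι]

theorem logDeriv_prod_sub (r : ι → ℝ) {c : ℝ} (hc : ∀ i, c ≠ r i) :
    logDeriv (fun y => ∏ i, (y - r i)) c = ∑ i, (c - r i)⁻¹ := by
  rw [logDeriv_prod (fun i _ => sub_ne_zero.2 (hc i)) (fun i _ => by fun_prop)]
  simp [logDeriv_apply]

theorem prod_sub_div_deriv (r : ι → ℝ) {c : ℝ} (hc : ∀ i, c ≠ r i) :
    (∏ i, (c - r i)) / deriv (fun y => ∏ i, (y - r i)) c = (∑ i, (c - r i)⁻¹)⁻¹ := by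
  rw [← logDeriv_prod_sub r hc, logDeriv_apply, inv_div]

theorem inv_sum_inv_lt {d : ι → ℝ} (hd : ∀ i, 0 < d i) {i j : ι} (hij : j ≠ i) :
    (∑ k, (d k)⁻¹)⁻¹ < d i := by
  have hlt : (d i)⁻¹ < ∑ k, (d k)⁻¹ :=
    single_lt_sum hij (mem_univ i) (mem_univ j) (inv_pos.2 (hd j))
      fun k _ _ => (inv_pos.2 (hd k)).le
  simpa using inv_strictAnti₀ (inv_pos.2 (hd i)) hlt

theorem div_card_le_inv_sum_inv {d : ι → ℝ} {i : ι} (hi : 0 < d i) (hmin : ∀ k, d i ≤ d k) :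
    d i / Fintype.card ι ≤ (∑ k, (d k)⁻¹)⁻¹ := by
  have hsum : ∑ k, (d k)⁻¹ ≤ Fintype.card ι * (d i)⁻¹ := by
    simpa using sum_le_sum fun k (_ : k ∈ univ) => inv_anti₀ hi (hmin k)
  have hsum_pos : 0 < ∑ k, (d k)⁻¹ :=
    (inv_pos.2 hi).trans_le
      (single_le_sum (fun k _ => (inv_pos.2 (hi.trans_le (hmin k))).le) (mem_univ i))
  simpa [div_eq_mul_inv, mul_comm] using inv_anti₀ hsum_pos hsum

theorem newtonMap_prod_sub (r : ι → ℝ) {i j : ι} (hmax : ∀ k, r k ≤ r i) (hij : j ≠ i)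
    {c : ℝ} (hc : r i < c) :
    r i < newtonMap (fun y => ∏ k, (y - r k)) c ∧
      newtonMap (fun y => ∏ k, (y - r k)) c - r i ≤ (1 - 1 / Fintype.card ι) * (c - r i) := by
  have hd : ∀ k, 0 < c - r k := fun k => by linarith [hmax k]
  rw [newtonMap, prod_sub_div_deriv r fun k => (sub_pos.1 (hd k)).ne']
  have hupper := inv_sum_inv_lt hd hij
  have hlower := div_card_le_inv_sum_inv (d := (c - r ·)) (hd i) fun k => by linarith [hmax k]
  constructor
  · linarith
  · linarith [show (1 - 1 / Fintype.card ι) * (c - r i) = c - r i - (c - r i) / Fintype.card ι by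
      ring]

end NewtonStep

theorem one_sub_one_div_pow_mul_le {n : ℝ} (hn : 1 ≤ n) {a ε : ℝ} (ha : 0 < a) (hε : 0 < ε)
    {t : ℕ} (ht : n * log (a / ε) ≤ t) : (1 - 1 / n) ^ t * a ≤ ε := by
  have hn0 : 0 < n := by linarith
  have hpow : (1 - 1 / n) ^ t ≤ exp (-(t / n)) := calc
    (1 - 1 / n) ^ t ≤ exp (-(1 / n)) ^ t := by
      gcongr
      · exact sub_nonneg.2 ((div_le_one hn0).2 hn)
      · linarith [add_one_le_exp (-(1 / n))]
    _ = exp (-(t / n)) := by rw [← exp_nat_mul]; ring_nf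
  have hexp : exp (-(t / n)) ≤ ε / a := by
    rw [← exp_log (div_pos hε ha), exp_le_exp, ← neg_le_neg_iff, neg_neg, ← log_inv, inv_div,
      le_div_iff₀ hn0]
    linarith
  calc (1 - 1 / n) ^ t * a ≤ ε / a * a := by gcongr; exact hpow.trans hexp
    _ = ε := div_mul_cancel₀ ε ha.ne'

/-- convergence of the Newton iteration for the largest root. -/
theorem newton_iteration_convergence
    (n : ℕ) (hn : 2 ≤ n) (lam : Fin n → ℝ) (hlam : Antitone lam)
    (p : ℝ → ℝ) (hp : ∀ y : ℝ, p y = ∏ i, (y - lam i))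
    (x : ℕ → ℝ) (hx0 : lam ⟨0, by omega⟩ < x 0)
    (hrec : ∀ t : ℕ, x (t + 1) = x t - p (x t) / deriv p (x t)) :
    (∀ t : ℕ, lam ⟨0, by omega⟩ < x t) ∧
      (∀ t : ℕ, x t - lam ⟨0, by omega⟩ ≤
        (1 - 1 / (n : ℝ)) ^ t * (x 0 - lam ⟨0, by omega⟩)) ∧
      ∀ ε : ℝ, 0 < ε → ε < 1 →
        ∀ t : ℕ, (n : ℝ) * Real.log ((x 0 - lam ⟨0, by omega⟩) / ε) ≤ (t : ℝ) →
          0 ≤ x t - lam ⟨0, by omega⟩ ∧ x t - lam ⟨0, by omega⟩ ≤ ε := by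
  replace hrec : ∀ t, x (t + 1) = newtonMap p (x t) := hrec
  obtain rfl : p = fun y => ∏ i, (y - lam i) := funext hp
  have hmax : ∀ k, lam k ≤ lam ⟨0, by omega⟩ := fun k => hlam (Fin.mk_le_mk.2 k.val.zero_le)
  have hstep (t : ℕ) := newtonMap_prod_sub lam hmax (j := ⟨1, by omega⟩) (by simp) (c := x t)
  rw [Fintype.card_fin] at hstep
  have habove : ∀ t, lam ⟨0, by omega⟩ < x t := by
    intro t
    induction t with
    | zero => exact hx0
    | succ t ih => exact hrec t ▸ (hstep t ih).1
  have hgeom : ∀ t, x t - lam ⟨0, by omega⟩ ≤ (1 - 1 / (n : ℝ)) ^ t * (x 0 - lam ⟨0, by omega⟩) :=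
    fun t => le_geom (u := (x · - lam ⟨0, by omega⟩)) (Nat.one_sub_one_div_cast_nonneg n) t
      fun k _ => hrec k ▸ (hstep k (habove k)).2
  refine ⟨habove, hgeom, fun ε hε _ t ht => ⟨(sub_pos.2 (habove t)).le, ?_⟩⟩
  exact (hgeom t).trans
    (one_sub_one_div_pow_mul_le (by exact_mod_cast (by omega : 1 ≤ n)) (sub_pos.2 hx0) hε ht)
end

section
/- Fix real numbers λ_1 ≥ λ_2 ≥ … ≥ λ_n with n ≥ 1, an integer k ≥ 2, and x > λ_1, and define g_m(x) = Σ_{i=1}^n 1/(x − λ_i)^m. Then (x − λ_1) ≤ g_{k−1}(x)/g_k(x) ≤ n^{1/k} · (x − λ_1). -/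
/-!
With `dᵢ = x - λᵢ`, the ratio `g_{k-1}(x) / g_k(x)` is the mean of the `dᵢ` with respect to the
probability weights `wᵢ ∝ dᵢ⁻ᵏ`. A mean is at least `min dᵢ = x - λ₁`. By Jensen for `t ↦ tᵏ`,
its `k`-th power is at most the `w`-mean of `dᵢᵏ`, which is `n / g_k(x) ≤ n (x - λ₁)ᵏ`.
-/

open Finset

namespace MomentRatio

variable {ι : Type*} [Fintype ι] {d : ι → ℝ}

noncomputable def moment (d : ι → ℝ) (m : ℕ) : ℝ := ∑ i, 1 / d i ^ m

noncomputable def weight (d : ι → ℝ) (m : ℕ) (i : ι) : ℝ := 1 / d i ^ m / moment d m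

lemma moment_pos [Nonempty ι] (hd : ∀ i, 0 < d i) (m : ℕ) : 0 < moment d m :=
  sum_pos (fun i _ => by have := hd i; positivity) univ_nonempty

lemma one_div_pow_le_moment (hd : ∀ i, 0 < d i) (m : ℕ) (i : ι) : 1 / d i ^ m ≤ moment d m :=
  single_le_sum (f := fun i => 1 / d i ^ m) (fun j _ => by have := hd j; positivity) (mem_univ i)

lemma weight_nonneg (hd : ∀ i, 0 < d i) (m : ℕ) (i : ι) : 0 ≤ weight d m i :=
  have := hd i
  div_nonneg (by positivity)
    ((by positivity : 0 ≤ 1 / d i ^ m).trans (one_div_pow_le_moment hd m i))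

lemma sum_weight [Nonempty ι] (hd : ∀ i, 0 < d i) (m : ℕ) : ∑ i, weight d m i = 1 := by
  simp_rw [weight, ← sum_div]
  exact div_self (moment_pos hd m).ne'

lemma sum_weight_mul [Nonempty ι] (hd : ∀ i, 0 < d i) (m : ℕ) :
    ∑ i, weight d (m + 1) i * d i = moment d m / moment d (m + 1) := by
  rw [moment, sum_div]
  refine sum_congr rfl fun i _ => ?_
  have := (hd i).ne'
  rw [weight]
  field_simp
  ring

lemma sum_weight_mul_pow (hd : ∀ i, 0 < d i) (m : ℕ) :
    ∑ i, weight d m i * d i ^ m = Fintype.card ι / moment d m := by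
  calc ∑ i, weight d m i * d i ^ m = ∑ _i : ι, 1 / moment d m := by
        refine sum_congr rfl fun i _ => ?_
        have := (hd i).ne'
        rw [weight]
        field_simp
    _ = Fintype.card ι / moment d m := by rw [sum_const, card_univ, nsmul_eq_mul, mul_one_div]

lemma le_moment_div_moment [Nonempty ι] (hd : ∀ i, 0 < d i) {c : ℝ} (hc : ∀ i, c ≤ d i)
    (m : ℕ) : c ≤ moment d m / moment d (m + 1) := by
  rw [← sum_weight_mul hd]
  calc c = ∑ i, weight d (m + 1) i * c := by rw [← sum_mul, sum_weight hd, one_mul]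
    _ ≤ ∑ i, weight d (m + 1) i * d i :=
      sum_le_sum fun i _ => mul_le_mul_of_nonneg_left (hc i) (weight_nonneg hd _ i)

lemma moment_div_moment_pow_le [Nonempty ι] (hd : ∀ i, 0 < d i) (m : ℕ) :
    (moment d m / moment d (m + 1)) ^ (m + 1) ≤ Fintype.card ι / moment d (m + 1) := by
  rw [← sum_weight_mul hd, ← sum_weight_mul_pow hd]
  exact Real.pow_arith_mean_le_arith_mean_pow univ _ _ (fun i _ => weight_nonneg hd _ i)
    (sum_weight hd _) (fun i _ => (hd i).le) _

lemma moment_div_moment_le [Nonempty ι] (hd : ∀ i, 0 < d i) (i₀ : ι) (m : ℕ) :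
    moment d m / moment d (m + 1) ≤ (Fintype.card ι : ℝ) ^ ((1 : ℝ) / ↑(m + 1)) * d i₀ := by
  have hcard : (0 : ℝ) ≤ Fintype.card ι := Nat.cast_nonneg _
  have hd₀ := hd i₀
  have hpow : (moment d m / moment d (m + 1)) ^ (m + 1) ≤ Fintype.card ι * d i₀ ^ (m + 1) := by
    refine (moment_div_moment_pow_le hd m).trans ?_
    rw [← mul_one_div]
    refine mul_le_mul_of_nonneg_left ?_ hcard
    rw [one_div_le (moment_pos hd _) (by positivity)]
    exact one_div_pow_le_moment hd _ i₀
  have hroot : ((Fintype.card ι : ℝ) ^ ((1 : ℝ) / ↑(m + 1)) * d i₀) ^ (m + 1)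
      = Fintype.card ι * d i₀ ^ (m + 1) := by
    rw [mul_pow, one_div, Real.rpow_inv_natCast_pow hcard m.succ_ne_zero]
  rw [← hroot] at hpow
  exact (pow_le_pow_iff_left₀ (div_nonneg (moment_pos hd _).le (moment_pos hd _).le)
    (by positivity) m.succ_ne_zero).mp hpow

end MomentRatio

open MomentRatio in
/-- `(x − λ₁) ≤ g_{k−1}(x)/g_k(x) ≤ n^{1/k} (x − λ₁)` for `x > λ₁`. -/
theorem moment_ratio_bounds
    (n : ℕ) (hn : 0 < n) (lam : Fin n → ℝ) (hlam : Antitone lam)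
    (k : ℕ) (hk : 2 ≤ k) (x : ℝ) (hx : lam ⟨0, hn⟩ < x)
    (g : ℕ → ℝ → ℝ) (hg : ∀ (m : ℕ) (y : ℝ), g m y = ∑ i, 1 / (y - lam i) ^ m) :
    x - lam ⟨0, hn⟩ ≤ g (k - 1) x / g k x ∧
      g (k - 1) x / g k x ≤ (n : ℝ) ^ ((1 : ℝ) / k) * (x - lam ⟨0, hn⟩) := by
  obtain ⟨m, rfl⟩ := Nat.exists_eq_add_of_le' (one_le_two.trans hk)
  have : Nonempty (Fin n) := ⟨⟨0, hn⟩⟩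
  have hmin : ∀ i, x - lam ⟨0, hn⟩ ≤ x - lam i := fun i =>
    sub_le_sub_left (hlam (Fin.mk_le_of_le_val (Nat.zero_le _))) x
  have hd : ∀ i, 0 < x - lam i := fun i => (sub_pos.mpr hx).trans_le (hmin i)
  have hgm : ∀ j, g j x = moment (fun i => x - lam i) j := fun j => hg j x
  rw [Nat.add_sub_cancel, hgm, hgm]
  refine ⟨le_moment_div_moment hd hmin m, ?_⟩
  simpa only [Fintype.card_fin] using moment_div_moment_le hd ⟨0, hn⟩ m
end

section
/- Fix real numbers λ_1 ≥ λ_2 ≥ … ≥ λ_n with n ≥ 2 and an integer k ≥ 2, and define g_m(x) = Σ_{i=1}^n 1/(x − λ_i)^m for x > λ_1. Let x^0 > λ_1 and define the accelerated iteration x^{t+1} = x^t − (1/n^{1/k}) · g_{k−1}(x^t)/g_k(x^t). Then x^t > λ_1 for every t ≥ 0 (so the iteration is well defined), and x^t − λ_1 ≤ (1 − 1/n^{1/k})^t · (x^0 − λ_1) for all t ≥ 0. -/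
/-!
Write `y i = x - λ_i > 0` and `d = x - λ_1 = min y`, so that `g_m = ∑ 1 / y i ^ m`.
Termwise `d / y^k ≤ y / y^k` gives `d g_k ≤ g_{k-1}`: the step is at least `d / n^{1/k}`,
which is the contraction by `1 - 1/n^{1/k}`. Weighted Hölder with weights `1 / y^k` gives
`g_{k-1} ≤ n^{1/k} g_k^{1-1/k}`, and `g_k > 1/d^k` (strictly, as `n ≥ 2`) turns this into
`g_{k-1} < n^{1/k} d g_k`: the step is shorter than `d`, so the iterate stays right of `λ_1`.
-/

open Finset Real

section MomentInequalities

variable {ι : Type*} [Fintype ι] {y : ι → ℝ} {k : ℕ}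

theorem one_div_pow_sub_one_eq {K : Type*} [Field K] (hk : 1 ≤ k) {a : K} (ha : a ≠ 0) :
    1 / a ^ (k - 1) = a * (1 / a ^ k) := by
  rw [pow_sub₀ a ha hk, pow_one]
  field_simp

theorem mul_sum_one_div_pow_le (hy : ∀ i, 0 < y i) (hk : 1 ≤ k) {d : ℝ}
    (hd : ∀ i, d ≤ y i) :
    d * ∑ i, 1 / y i ^ k ≤ ∑ i, 1 / y i ^ (k - 1) := by
  rw [mul_sum]
  refine sum_le_sum fun i _ => ?_
  rw [one_div_pow_sub_one_eq hk (hy i).ne']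
  exact mul_le_mul_of_nonneg_right (hd i) (by have := hy i; positivity)

theorem sum_one_div_pow_sub_one_le (hy : ∀ i, 0 < y i) (hk : 1 ≤ k) :
    ∑ i, 1 / y i ^ (k - 1) ≤
      (Fintype.card ι : ℝ) ^ ((1 : ℝ) / k) * (∑ i, 1 / y i ^ k) ^ (1 - (1 : ℝ) / k) := by
  have holder := inner_le_weight_mul_Lp_of_nonneg univ (p := k) (by exact_mod_cast hk)
    (fun i => 1 / y i ^ k) y (fun i => by have := hy i; positivity) (fun i => (hy i).le)
  have hweight : ∀ i, 1 / y i ^ k * y i ^ (k : ℝ) = 1 := fun i => by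
    rw [rpow_natCast, one_div_mul_cancel (pow_ne_zero k (hy i).ne')]
  simp only [hweight, sum_const, card_univ, nsmul_eq_mul, mul_one] at holder
  rw [mul_comm, one_div]
  simpa only [one_div_pow_sub_one_eq hk (hy _).ne', mul_comm (y _), inv_eq_one_div] using holder

theorem one_div_pow_lt_sum_one_div_pow [Nontrivial ι] (hy : ∀ i, 0 < y i) (i₀ : ι) :
    1 / y i₀ ^ k < ∑ i, 1 / y i ^ k := by
  obtain ⟨j, hj⟩ := exists_ne i₀
  exact single_lt_sum (f := fun i => 1 / y i ^ k) hj (mem_univ _) (mem_univ _)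
    (by have := hy j; positivity)
    fun i _ _ => by have := hy i; positivity

theorem sum_one_div_pow_sub_one_lt [Nontrivial ι] (hy : ∀ i, 0 < y i) (hk : 1 ≤ k)
    (i₀ : ι) :
    ∑ i, 1 / y i ^ (k - 1) <
      (Fintype.card ι : ℝ) ^ ((1 : ℝ) / k) * (y i₀ * ∑ i, 1 / y i ^ k) := by
  set S := ∑ i, 1 / y i ^ k
  have hy₀ := hy i₀
  have hS : 0 < S := lt_trans (by positivity) (one_div_pow_lt_sum_one_div_pow hy i₀)
  have hroot : 1 / y i₀ < S ^ ((1 : ℝ) / k) := by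
    rw [one_div (k : ℝ), lt_rpow_inv_iff_of_pos (by positivity) hS.le (by positivity),
      rpow_natCast, div_pow, one_pow]
    exact one_div_pow_lt_sum_one_div_pow hy i₀
  have hpow : S ^ (1 - (1 : ℝ) / k) < y i₀ * S := by
    rw [rpow_sub hS, rpow_one, div_lt_iff₀ (by positivity)]
    calc S = y i₀ * S * (1 / y i₀) := by field_simp
      _ < y i₀ * S * S ^ ((1 : ℝ) / k) := by gcongr
  calc ∑ i, 1 / y i ^ (k - 1)
      ≤ (Fintype.card ι : ℝ) ^ ((1 : ℝ) / k) * S ^ (1 - (1 : ℝ) / k) :=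
        sum_one_div_pow_sub_one_le hy hk
    _ < (Fintype.card ι : ℝ) ^ ((1 : ℝ) / k) * (y i₀ * S) := by gcongr

end MomentInequalities

section NewtonStep

variable {ι : Type*} [Fintype ι]

noncomputable def newtonStep (lam : ι → ℝ) (k : ℕ) (x : ℝ) : ℝ :=
  x - 1 / (Fintype.card ι : ℝ) ^ ((1 : ℝ) / k) *
    ((∑ i, 1 / (x - lam i) ^ (k - 1)) / ∑ i, 1 / (x - lam i) ^ k)

theorem newtonStep_bounds [Nontrivial ι] {lam : ι → ℝ} {i₀ : ι} {k : ℕ}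
    (hmax : ∀ i, lam i ≤ lam i₀) (hk : 1 ≤ k) {x : ℝ} (hx : lam i₀ < x) :
    lam i₀ < newtonStep lam k x ∧
      newtonStep lam k x - lam i₀ ≤
        (1 - 1 / (Fintype.card ι : ℝ) ^ ((1 : ℝ) / k)) * (x - lam i₀) := by
  have hy : ∀ i, 0 < x - lam i := fun i => sub_pos.2 ((hmax i).trans_lt hx)
  have hS : 0 < ∑ i, 1 / (x - lam i) ^ k := sum_pos (fun i _ => by have := hy i; positivity)
    univ_nonempty
  have hc : 0 < (Fintype.card ι : ℝ) ^ ((1 : ℝ) / k) := by positivity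
  have hlower : x - lam i₀ ≤
      (∑ i, 1 / (x - lam i) ^ (k - 1)) / ∑ i, 1 / (x - lam i) ^ k := by
    rw [le_div_iff₀ hS]
    exact mul_sum_one_div_pow_le hy hk fun i => sub_le_sub_left (hmax i) x
  have hupper : (∑ i, 1 / (x - lam i) ^ (k - 1)) / ∑ i, 1 / (x - lam i) ^ k <
      (Fintype.card ι : ℝ) ^ ((1 : ℝ) / k) * (x - lam i₀) := by
    rw [div_lt_iff₀ hS, mul_assoc]
    exact sum_one_div_pow_sub_one_lt hy hk i₀
  unfold newtonStep
  constructor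
  · rw [one_div_mul_eq_div, lt_sub_iff_add_lt', ← lt_sub_iff_add_lt, div_lt_iff₀' hc]
    exact hupper
  · rw [sub_right_comm, sub_mul, one_mul, one_div_mul_eq_div, one_div_mul_eq_div]
    gcongr

end NewtonStep

/-- convergence of the accelerated (k-th order) Newton iteration. -/
theorem accelerated_newton_convergence
    (n : ℕ) (hn : 2 ≤ n) (lam : Fin n → ℝ) (hlam : Antitone lam)
    (k : ℕ) (hk : 2 ≤ k)
    (g : ℕ → ℝ → ℝ) (hg : ∀ (m : ℕ) (y : ℝ), g m y = ∑ i, 1 / (y - lam i) ^ m)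
    (x : ℕ → ℝ) (hx0 : lam ⟨0, by omega⟩ < x 0)
    (hrec : ∀ t : ℕ, x (t + 1) =
      x t - (1 / (n : ℝ) ^ ((1 : ℝ) / k)) * (g (k - 1) (x t) / g k (x t))) :
    ∀ t : ℕ, lam ⟨0, by omega⟩ < x t ∧
      x t - lam ⟨0, by omega⟩ ≤
        (1 - 1 / (n : ℝ) ^ ((1 : ℝ) / k)) ^ t * (x 0 - lam ⟨0, by omega⟩) := by
  have : Nontrivial (Fin n) := Fin.nontrivial_iff_two_le.mpr hn
  have hmax : ∀ i, lam i ≤ lam ⟨0, by omega⟩ := fun i => hlam (Nat.zero_le i.val)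
  have hstep : ∀ t, x (t + 1) = newtonStep lam k (x t) := fun t => by
    rw [hrec, hg, hg, newtonStep, Fintype.card_fin]
  have hfactor : 0 ≤ 1 - 1 / (n : ℝ) ^ ((1 : ℝ) / k) :=
    sub_nonneg.2 <| div_le_one_of_le₀ (one_le_rpow (by exact_mod_cast (by omega : 1 ≤ n))
      (by positivity)) (by positivity)
  intro t
  induction t with
  | zero => simpa using hx0
  | succ t ih =>
    obtain ⟨hpos, hcontr⟩ := newtonStep_bounds (k := k) hmax (by omega) ih.1
    rw [Fintype.card_fin] at hcontr
    refine ⟨hstep t ▸ hpos, hstep t ▸ hcontr.trans ?_⟩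
    rw [pow_succ', mul_assoc]
    exact mul_le_mul_of_nonneg_left ih.2 hfactor
end

section
/- Let p(x) = ∏_{i=1}^n (x − λ_i) with real roots λ_1 ≥ λ_2 ≥ … ≥ λ_n, let x > λ_1, set ξ = 1/(x − λ_1), and let α > 0 satisfy α·n·ξ < 1. Then (p(x+α) − p(x))/α ≤ p'(x) + p(x) · (α·n²·ξ²)/(1 − α·n·ξ). -/
/-!
Writing `d i = 1 / (x - λ i)`, one has `p (x + α) = p x * ∏ (1 + α d i)` and
`p' x = p x * ∑ d i`. Since `1 + u ≤ exp u ≤ 1 / (1 - u)`, the product is at most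
`1 / (1 - s)` with `s = α ∑ d i ≤ α n ξ < 1`, and `1 / (1 - s) - 1 = s + s² / (1 - s)`,
whose second term is monotone in `s`.
-/

open Finset

theorem Real.prod_one_add_le_one_div_one_sub_sum {ι : Type*} (s : Finset ι) {f : ι → ℝ}
    (hf : ∀ i, 0 ≤ f i) (hs : ∑ i ∈ s, f i < 1) :
    ∏ i ∈ s, (1 + f i) ≤ 1 / (1 - ∑ i ∈ s, f i) :=
  (prod_one_add_le_exp_sum s hf).trans
    (exp_bound_div_one_sub_of_interval (sum_nonneg fun i _ ↦ hf i) hs)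

theorem one_div_one_sub_sub_one_le {s t : ℝ} (hs : 0 ≤ s) (hst : s ≤ t) (ht : t < 1) :
    1 / (1 - s) - 1 ≤ s + t ^ 2 / (1 - t) := by
  have h1s : 0 < 1 - s := by linarith
  have h1t : 0 < 1 - t := by linarith
  have : s ^ 2 / (1 - s) ≤ t ^ 2 / (1 - t) := by gcongr
  calc 1 / (1 - s) - 1 = s + s ^ 2 / (1 - s) := by field_simp; ring
    _ ≤ s + t ^ 2 / (1 - t) := by linarith

section ProdSub

variable {ι : Type*} (s : Finset ι) (r : ι → ℝ) {x : ℝ}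

theorem logDeriv_prod_sub_s11 (hx : ∀ i ∈ s, x ≠ r i) :
    logDeriv (fun y ↦ ∏ i ∈ s, (y - r i)) x = ∑ i ∈ s, 1 / (x - r i) := by
  rw [logDeriv_prod (fun i hi ↦ sub_ne_zero.mpr (hx i hi)) fun i _ ↦ by fun_prop]
  refine sum_congr rfl fun i _ ↦ ?_
  simp [logDeriv_apply]

theorem prod_add_sub_eq_prod_sub_mul (hx : ∀ i ∈ s, x ≠ r i) (α : ℝ) :
    ∏ i ∈ s, (x + α - r i) = (∏ i ∈ s, (x - r i)) * ∏ i ∈ s, (1 + α / (x - r i)) := by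
  rw [← prod_mul_distrib]
  refine prod_congr rfl fun i hi ↦ ?_
  have := sub_ne_zero.mpr (hx i hi)
  field_simp
  ring

end ProdSub

theorem forward_difference_prod_sub_le {ι : Type*} [Fintype ι] {r : ι → ℝ} {p : ℝ → ℝ}
    (hp : ∀ y, p y = ∏ i, (y - r i)) {x ξ α : ℝ} (hr : ∀ i, r i < x)
    (hξ : ∀ i, 1 / (x - r i) ≤ ξ) (hα : 0 < α) (hsmall : α * Fintype.card ι * ξ < 1) :
    (p (x + α) - p x) / α ≤
      deriv p x + p x * (α * (Fintype.card ι : ℝ) ^ 2 * ξ ^ 2 / (1 - α * Fintype.card ι * ξ)) := by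
  have hne : ∀ i ∈ univ, x ≠ r i := fun i _ ↦ (hr i).ne'
  have hd : ∀ i, 0 < x - r i := fun i ↦ sub_pos.mpr (hr i)
  set L := ∑ i, 1 / (x - r i)
  set T := α * Fintype.card ι * ξ
  have hpx : 0 < p x := hp x ▸ prod_pos fun i _ ↦ hd i
  have hL : 0 ≤ L := sum_nonneg fun i _ ↦ (one_div_pos.mpr (hd i)).le
  have hLT : α * L ≤ T := by
    have := sum_le_card_nsmul univ _ ξ fun i _ ↦ hξ i
    rw [nsmul_eq_mul, card_univ] at this
    simp only [T, mul_assoc]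
    exact mul_le_mul_of_nonneg_left this hα.le
  have hderiv : deriv p x = p x * L := by
    have h := logDeriv_prod_sub_s11 univ r hne
    rw [← funext hp, logDeriv_apply, div_eq_iff hpx.ne'] at h
    rw [h, mul_comm]
  have hshift : p (x + α) ≤ p x * (1 / (1 - α * L)) := by
    rw [hp, hp, prod_add_sub_eq_prod_sub_mul univ r hne]
    refine mul_le_mul_of_nonneg_left ?_ (hp x ▸ hpx.le)
    have hsum : ∑ i, α / (x - r i) = α * L := by simp only [L, mul_sum, mul_one_div]
    rw [← hsum]
    exact Real.prod_one_add_le_one_div_one_sub_sum _ (fun i ↦ (div_pos hα (hd i)).le)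
      (hsum ▸ hLT.trans_lt hsmall)
  calc (p (x + α) - p x) / α ≤ (p x * (1 / (1 - α * L)) - p x) / α := by gcongr
    _ = p x * ((1 / (1 - α * L) - 1) / α) := by ring
    _ ≤ p x * ((α * L + T ^ 2 / (1 - T)) / α) := by
        gcongr
        exact one_div_one_sub_sub_one_le (by positivity) hLT hsmall
    _ = deriv p x + p x * (α * (Fintype.card ι : ℝ) ^ 2 * ξ ^ 2 / (1 - T)) := by
        rw [hderiv]; field_simp; ring

/-- upper bound on the forward difference of `p` in terms of
`ξ = 1/(x − λ₁)` when `α·n·ξ < 1`. -/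
theorem forward_difference_upper_bound
    (n : ℕ) (hn : 0 < n) (lam : Fin n → ℝ) (hlam : Antitone lam)
    (p : ℝ → ℝ) (hp : ∀ y : ℝ, p y = ∏ i, (y - lam i))
    (x : ℝ) (hx : lam ⟨0, hn⟩ < x)
    (ξ : ℝ) (hξ : ξ = 1 / (x - lam ⟨0, hn⟩))
    (α : ℝ) (hα : 0 < α) (hsmall : α * n * ξ < 1) :
    (p (x + α) - p x) / α ≤
      deriv p x + p x * (α * (n : ℝ) ^ 2 * ξ ^ 2 / (1 - α * n * ξ)) := by
  have hmax : ∀ i, lam i ≤ lam ⟨0, hn⟩ := fun i ↦ hlam (Nat.zero_le _)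
  have hr : ∀ i, lam i < x := fun i ↦ (hmax i).trans_lt hx
  have hd : ∀ i, 1 / (x - lam i) ≤ ξ := fun i ↦
    hξ ▸ one_div_le_one_div_of_le (sub_pos.mpr hx) (sub_le_sub_left (hmax i) x)
  simpa using forward_difference_prod_sub_le hp hr hd hα (by simpa using hsmall)
end

section
/- Let p(x) = ∏_{i=1}^n (x − λ_i) with n ≥ 1 and real roots λ_1 ≥ λ_2 ≥ … ≥ λ_n all lying in [0, 1/2]. Let ε' ∈ (0, 1/2], δ' ∈ (0, 1], and set α = δ'·ε'²/(2n²). Define g̃_1(x) = (p(x+α) − p(x))/(α·p(x)) and g_1(x) = Σ_{i=1}^n 1/(x − λ_i). Then for every x ∈ [λ_1 + ε', 1]: g_1(x) ≤ g̃_1(x) ≤ g_1(x) + δ'. -/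
/-!
With `tᵢ = α / (x - λᵢ)` one has `p (x + α) = p x * ∏ (1 + tᵢ)`, and `S = ∑ tᵢ = α g₁(x)`.
For nonnegative `tᵢ`, `1 + S ≤ ∏ (1 + tᵢ) ≤ exp S ≤ 1 + S + S²` (the last step needs `S ≤ 1`),
so `g₁ ≤ g̃₁ ≤ g₁ + α g₁²`. Every root is at distance at least `ε'` from `x`, hence `g₁ ≤ n / ε'`,
which makes `α g₁ ≤ 1` and `α g₁² ≤ δ' / 2`.
-/

open Finset

theorem one_add_sum_le_prod_one_add {ι R : Type*} [CommSemiring R] [PartialOrder R]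
    [IsOrderedRing R] (s : Finset ι) {f : ι → R} (hf : ∀ i ∈ s, 0 ≤ f i) :
    1 + ∑ i ∈ s, f i ≤ ∏ i ∈ s, (1 + f i) := by
  induction s using Finset.cons_induction with
  | empty => simp
  | cons a s ha ih =>
    have hfa : 0 ≤ f a := hf a (mem_cons_self a s)
    have hfs : ∀ i ∈ s, 0 ≤ f i := fun i hi ↦ hf i (mem_cons_of_mem hi)
    rw [sum_cons, prod_cons]
    calc 1 + (f a + ∑ i ∈ s, f i)
        ≤ (1 + f a) * (1 + ∑ i ∈ s, f i) := by
          have := mul_nonneg hfa (sum_nonneg hfs)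
          rw [add_mul, one_mul, mul_add, mul_one]
          exact le_of_le_of_eq (le_add_of_nonneg_right this) (by abel)
      _ ≤ (1 + f a) * ∏ i ∈ s, (1 + f i) :=
          mul_le_mul_of_nonneg_left (ih hfs) (add_nonneg zero_le_one hfa)

theorem Real.prod_one_add_le_one_add_sum_add_sq {ι : Type*} (s : Finset ι) {f : ι → ℝ}
    (hf : ∀ i, 0 ≤ f i) (hsum : ∑ i ∈ s, f i ≤ 1) :
    ∏ i ∈ s, (1 + f i) ≤ 1 + ∑ i ∈ s, f i + (∑ i ∈ s, f i) ^ 2 := by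
  have habs : |∑ i ∈ s, f i| ≤ 1 := abs_le.2 ⟨by linarith [sum_nonneg fun i (_ : i ∈ s) ↦ hf i], hsum⟩
  have := (abs_le.1 (Real.abs_exp_sub_one_sub_id_le habs)).2
  linarith [Real.prod_one_add_le_exp_sum s hf]

theorem prod_add_sub_eq_prod_sub_mul_prod_one_add {ι K : Type*} [Field K] (s : Finset ι)
    {lam : ι → K} {x : K} (hx : ∀ i ∈ s, x - lam i ≠ 0) (a : K) :
    ∏ i ∈ s, (x + a - lam i) = (∏ i ∈ s, (x - lam i)) * ∏ i ∈ s, (1 + a / (x - lam i)) := by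
  rw [← prod_mul_distrib]
  refine prod_congr rfl fun i hi ↦ ?_
  rw [mul_one_add, mul_div_cancel₀ _ (hx i hi)]
  ring

section ForwardDifference

variable {ι : Type*} [Fintype ι] {lam : ι → ℝ} {p : ℝ → ℝ} {x α : ℝ}

theorem forward_diff_quotient_eq (hp : ∀ y, p y = ∏ i, (y - lam i)) (hx : ∀ i, lam i < x)
    (hα : α ≠ 0) :
    (p (x + α) - p x) / (α * p x) = (∏ i, (1 + α / (x - lam i)) - 1) / α := by
  have hpx : p x ≠ 0 := by
    rw [hp]
    exact prod_ne_zero_iff.2 fun i _ ↦ sub_ne_zero.2 (hx i).ne'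
  rw [hp (x + α), prod_add_sub_eq_prod_sub_mul_prod_one_add _ (fun i _ ↦ sub_ne_zero.2 (hx i).ne'),
    ← hp]
  field_simp

theorem mul_sum_one_div_sub_eq (α : ℝ) :
    α * ∑ i, 1 / (x - lam i) = ∑ i, α / (x - lam i) := by
  simp only [mul_sum, mul_one_div]

theorem sum_one_div_sub_le_forward_diff_quotient (hp : ∀ y, p y = ∏ i, (y - lam i))
    (hx : ∀ i, lam i < x) (hα : 0 < α) :
    ∑ i, 1 / (x - lam i) ≤ (p (x + α) - p x) / (α * p x) := by
  rw [forward_diff_quotient_eq hp hx hα.ne', le_div_iff₀ hα, mul_comm, mul_sum_one_div_sub_eq]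
  linarith [one_add_sum_le_prod_one_add univ fun i _ ↦ (div_pos hα (sub_pos.2 (hx i))).le]

theorem forward_diff_quotient_le_sum_one_div_sub_add (hp : ∀ y, p y = ∏ i, (y - lam i))
    (hx : ∀ i, lam i < x) (hα : 0 < α) (hαg : α * ∑ i, 1 / (x - lam i) ≤ 1) :
    (p (x + α) - p x) / (α * p x) ≤
      ∑ i, 1 / (x - lam i) + α * (∑ i, 1 / (x - lam i)) ^ 2 := by
  rw [forward_diff_quotient_eq hp hx hα.ne', div_le_iff₀ hα]
  have key := Real.prod_one_add_le_one_add_sum_add_sq univ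
    (fun i ↦ (div_pos hα (sub_pos.2 (hx i))).le) (by rwa [← mul_sum_one_div_sub_eq])
  rw [← mul_sum_one_div_sub_eq] at key
  linarith

end ForwardDifference

theorem g1_forward_difference_approximation_general
    (n : ℕ) (hn : 0 < n) (lam : Fin n → ℝ) (hlam : Antitone lam)
    (p : ℝ → ℝ) (hp : ∀ y : ℝ, p y = ∏ i, (y - lam i))
    (ε' δ' : ℝ) (hε' : ε' ∈ Set.Ioc (0 : ℝ) (1 / 2)) (hδ' : δ' ∈ Set.Ioc (0 : ℝ) 1)
    (α : ℝ) (hα : α = δ' * ε' ^ 2 / (2 * (n : ℝ) ^ 2))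
    (x : ℝ) (hx : x ∈ Set.Icc (lam ⟨0, hn⟩ + ε') 1) :
    (∑ i, 1 / (x - lam i)) ≤ (p (x + α) - p x) / (α * p x) ∧
      (p (x + α) - p x) / (α * p x) ≤ (∑ i, 1 / (x - lam i)) + δ' := by
  obtain ⟨hε0, hε2⟩ := hε'
  obtain ⟨hδ0, hδ1⟩ := hδ'
  have hnR : (1 : ℝ) ≤ n := by exact_mod_cast hn
  have hα0 : 0 < α := by rw [hα]; positivity
  have hgap : ∀ i, ε' ≤ x - lam i := fun i ↦ by
    linarith [hx.1, hlam (show (⟨0, hn⟩ : Fin n) ≤ i from Nat.zero_le _)]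
  have hroot : ∀ i, lam i < x := fun i ↦ by linarith [hgap i]
  set g := ∑ i, 1 / (x - lam i)
  have hg0 : 0 ≤ g := sum_nonneg fun i _ ↦ (one_div_pos.2 (sub_pos.2 (hroot i))).le
  have hg : g ≤ n / ε' := by
    calc g ≤ ∑ _i : Fin n, 1 / ε' := sum_le_sum fun i _ ↦ one_div_le_one_div_of_le hε0 (hgap i)
      _ = n / ε' := by simp [div_eq_mul_inv]
  have hαg : α * g ≤ 1 :=
    calc α * g ≤ α * (n / ε') := mul_le_mul_of_nonneg_left hg hα0.le
      _ = δ' * ε' / (2 * n) := by rw [hα]; field_simp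
      _ ≤ 1 := by rw [div_le_one (by positivity)]; nlinarith
  have hαg2 : α * g ^ 2 ≤ δ' :=
    calc α * g ^ 2 ≤ α * (n / ε') ^ 2 :=
          mul_le_mul_of_nonneg_left (pow_le_pow_left₀ hg0 hg 2) hα0.le
      _ = δ' / 2 := by rw [hα]; field_simp
      _ ≤ δ' := by linarith
  exact ⟨sum_one_div_sub_le_forward_diff_quotient hp hroot hα0,
    (forward_diff_quotient_le_sum_one_div_sub_add hp hroot hα0 hαg).trans (by linarith)⟩

/-- the forward-difference approximation `g̃₁` of `g₁ = p'/p` satisfies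
`g₁(x) ≤ g̃₁(x) ≤ g₁(x) + δ'` on `[λ₁ + ε', 1]`. -/
theorem g1_forward_difference_approximation
    (n : ℕ) (hn : 0 < n) (lam : Fin n → ℝ) (hlam : Antitone lam)
    (hroots : ∀ i, lam i ∈ Set.Icc (0 : ℝ) (1 / 2))
    (p : ℝ → ℝ) (hp : ∀ y : ℝ, p y = ∏ i, (y - lam i))
    (ε' δ' : ℝ) (hε' : ε' ∈ Set.Ioc (0 : ℝ) (1 / 2)) (hδ' : δ' ∈ Set.Ioc (0 : ℝ) 1)
    (α : ℝ) (hα : α = δ' * ε' ^ 2 / (2 * (n : ℝ) ^ 2))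
    (x : ℝ) (hx : x ∈ Set.Icc (lam ⟨0, hn⟩ + ε') 1) :
    (∑ i, 1 / (x - lam i)) ≤ (p (x + α) - p x) / (α * p x) ∧
      (p (x + α) - p x) / (α * p x) ≤ (∑ i, 1 / (x - lam i)) + δ' :=
  g1_forward_difference_approximation_general n hn lam hlam p hp ε' δ' hε' hδ' α hα x hx
end

section
/- Fix real numbers λ_1 ≥ λ_2 ≥ … ≥ λ_n, define g_m(x) = Σ_{i=1}^n 1/(x − λ_i)^m for x > λ_1, let k ≥ 1 be an integer, let x > λ_1, set ξ = 1/(x − λ_1), and let δ > 0 satisfy k·δ·ξ < 1. Define h_{k+1}(x) = ((−1)^k/(k!·δ^k)) · Σ_{i=0}^{k} (−1)^i · C(k,i) · g_1(x + (k−i)δ). Then |h_{k+1}(x) − g_{k+1}(x)| ≤ g_{k+1}(x) · ((2k)^k/k!) · (k·δ·ξ)/(1 − k·δ·ξ). -/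
/-!
The `k`-th forward difference of `y ↦ 1 / y` with step `δ` is
`(-1)^k k! δ^k / ∏_{j=0}^{k} (y + jδ)`, so `h_{k+1}(x) = ∑_t 1 / ∏_{j=0}^{k} (a_t + jδ)` with
`a_t = x - λ_t`. Since `kδ ≤ u a_t` for `u = kδξ`, each product lies between `a_t^{k+1}` and
`a_t^{k+1} (1 + u)^k`, and by convexity `(1 + u)^k - 1 ≤ (2^k - 1) u ≤ ((2k)^k / k!) · u / (1 - u)`.
-/

open Finset fwdDiff

theorem fwdDiff_iter_eq_sum_shift_rev {R : Type*} [CommRing R] (f : R → R) (δ x : R) (k : ℕ) :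
    (Δ_[δ])^[k] f x =
      ∑ i ∈ range (k + 1), (-1) ^ i * (k.choose i : R) * f (x + ((k - i : ℕ) : R) * δ) := by
  rw [fwdDiff_iter_eq_sum_shift, ← sum_range_reflect]
  refine sum_congr rfl fun i hi => ?_
  have hik : i ≤ k := Nat.lt_succ_iff.mp (mem_range.mp hi)
  rw [Nat.add_sub_cancel, Nat.sub_sub_self hik, Nat.choose_symm hik, nsmul_eq_mul, zsmul_eq_mul]
  push_cast
  ring

theorem fwdDiff_iter_inv {K : Type*} [Field K] (δ : K) (k : ℕ) (a : K)
    (ha : ∀ j ≤ k, a + j * δ ≠ 0) :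
    (Δ_[δ])^[k] (·⁻¹) a =
      (-1) ^ k * (k.factorial : K) * δ ^ k / ∏ j ∈ range (k + 1), (a + j * δ) := by
  induction k generalizing a with
  | zero => simp
  | succ k ih =>
    have hbase : ∀ j ≤ k, a + j * δ ≠ 0 := fun j hj => ha j (by omega)
    have hshift : ∀ j ≤ k, a + δ + j * δ ≠ 0 := fun j hj => by
      simpa [add_one_mul, add_assoc, add_comm δ] using ha (j + 1) (by omega)
    have hP : ∏ j ∈ range (k + 1), (a + j * δ) ≠ 0 :=
      prod_ne_zero_iff.mpr fun j hj => hbase j (by simp at hj; omega)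
    have hQ : ∏ j ∈ range (k + 1), (a + δ + j * δ) ≠ 0 :=
      prod_ne_zero_iff.mpr fun j hj => hshift j (by simp at hj; omega)
    have ha0 : a ≠ 0 := by simpa using ha 0 (Nat.zero_le _)
    have hfirst :
        ∏ j ∈ range (k + 2), (a + j * δ) = a * ∏ j ∈ range (k + 1), (a + δ + j * δ) := by
      rw [prod_range_succ', mul_comm]
      simp only [Nat.cast_zero, zero_mul, add_zero, Nat.cast_succ]
      congr 1
      exact prod_congr rfl fun j _ => by ring
    have hlast : ∏ j ∈ range (k + 2), (a + j * δ) =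
        (∏ j ∈ range (k + 1), (a + j * δ)) * (a + (k + 1) * δ) := by
      rw [prod_range_succ]; push_cast; ring
    rw [Function.iterate_succ_apply', fwdDiff, ih (a + δ) hshift, ih a hbase, hfirst,
      Nat.factorial_succ]
    rw [hfirst] at hlast
    generalize ∏ j ∈ range (k + 1), (a + j * δ) = P at hP hlast ⊢
    generalize ∏ j ∈ range (k + 1), (a + δ + j * δ) = Q at hQ hlast ⊢
    push_cast
    field_simp
    linear_combination (-(-1) ^ k * (k.factorial : K) * δ ^ k) * hlast

theorem fwdDiff_iter_sum_inv_sub {ι : Type*} (s : Finset ι) (c : ι → ℝ) (δ x : ℝ) (k : ℕ)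
    (hc : ∀ t ∈ s, ∀ j ≤ k, x - c t + j * δ ≠ 0) :
    (Δ_[δ])^[k] (fun y => ∑ t ∈ s, (y - c t)⁻¹) x =
      ∑ t ∈ s, (-1) ^ k * (k.factorial : ℝ) * δ ^ k / ∏ j ∈ range (k + 1), (x - c t + j * δ) := by
  have hsum : (fun y => ∑ t ∈ s, (y - c t)⁻¹) = ∑ t ∈ s, fun y => (y + -c t)⁻¹ := by
    ext y
    simp [sub_eq_add_neg]
  rw [hsum, fwdDiff_iter_finsetSum, Finset.sum_apply]
  refine sum_congr rfl fun t ht => ?_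
  rw [fwdDiff_iter_comp_add (f := (·⁻¹)),
    fwdDiff_iter_inv δ k _ (by simpa [sub_eq_add_neg] using hc t ht), ← sub_eq_add_neg]

theorem one_add_pow_le_one_add_mul {u : ℝ} (hu0 : 0 ≤ u) (hu1 : u ≤ 1) (k : ℕ) :
    (1 + u) ^ k ≤ 1 + (2 ^ k - 1) * u := by
  induction k with
  | zero => simp
  | succ k ih =>
    have h2k : (1 : ℝ) ≤ 2 ^ k := one_le_pow₀ one_le_two
    calc (1 + u) ^ (k + 1) = (1 + u) ^ k * (1 + u) := pow_succ _ _
      _ ≤ (1 + (2 ^ k - 1) * u) * (1 + u) := by gcongr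
      _ ≤ 1 + (2 ^ (k + 1) - 1) * u := by
        rw [pow_succ]
        nlinarith [mul_nonneg (mul_nonneg (sub_nonneg.mpr h2k) hu0) (sub_nonneg.mpr hu1)]

theorem one_add_pow_sub_one_le {u : ℝ} (hu0 : 0 ≤ u) (hu1 : u < 1) (k : ℕ) :
    (1 + u) ^ k - 1 ≤ (2 * k) ^ k / k.factorial * (u / (1 - u)) := by
  have hfac : (0 : ℝ) < k.factorial := by positivity
  have h2k : (2 : ℝ) ^ k ≤ (2 * k) ^ k / k.factorial := by
    rw [le_div_iff₀ hfac, mul_pow]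
    gcongr
    exact_mod_cast Nat.factorial_le_pow k
  have hu : u ≤ u / (1 - u) := le_div_self hu0 (by linarith) (by linarith)
  calc (1 + u) ^ k - 1 ≤ (2 ^ k - 1) * u := by linarith [one_add_pow_le_one_add_mul hu0 hu1.le k]
    _ ≤ 2 ^ k * u := by nlinarith
    _ ≤ (2 * k) ^ k / k.factorial * (u / (1 - u)) := by gcongr

theorem pow_le_prod_add_mul {a δ : ℝ} (ha : 0 ≤ a) (hδ : 0 ≤ δ) (k : ℕ) :
    a ^ k ≤ ∏ j ∈ range k, (a + j * δ) := by
  calc a ^ k = ∏ _j ∈ range k, a := by rw [prod_const, card_range]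
    _ ≤ ∏ j ∈ range k, (a + j * δ) :=
      prod_le_prod (fun _ _ => ha) fun j _ => le_add_of_nonneg_right (by positivity)

theorem prod_add_mul_le {a δ : ℝ} (ha : 0 ≤ a) (hδ : 0 ≤ δ) (k : ℕ) :
    ∏ j ∈ range (k + 1), (a + j * δ) ≤ a * (a + k * δ) ^ k := by
  rw [prod_range_succ', mul_comm]
  simp only [Nat.cast_zero, zero_mul, add_zero]
  gcongr
  calc ∏ j ∈ range k, (a + (j + 1 : ℕ) * δ) ≤ ∏ _j ∈ range k, (a + k * δ) := by
        refine prod_le_prod (fun _ _ => by positivity) fun j hj => ?_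
        gcongr
        exact_mod_cast mem_range.mp hj
    _ = (a + k * δ) ^ k := by rw [prod_const, card_range]

theorem abs_one_div_prod_sub_one_div_pow_le {a δ u : ℝ} (k : ℕ) (ha : 0 < a) (hδ : 0 ≤ δ)
    (hu : u < 1) (hkδ : k * δ ≤ u * a) :
    |1 / ∏ j ∈ range (k + 1), (a + j * δ) - 1 / a ^ (k + 1)| ≤
      1 / a ^ (k + 1) * ((2 * k) ^ k / k.factorial * (u / (1 - u))) := by
  set P := ∏ j ∈ range (k + 1), (a + j * δ)
  have hu0 : 0 ≤ u := nonneg_of_mul_nonneg_left ((by positivity : (0 : ℝ) ≤ k * δ).trans hkδ) ha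
  have hq : 0 < a ^ (k + 1) := by positivity
  have hqP : a ^ (k + 1) ≤ P := pow_le_prod_add_mul ha.le hδ (k + 1)
  have hP : 0 < P := hq.trans_le hqP
  have hPq : P ≤ a ^ (k + 1) * (1 + u) ^ k :=
    calc P ≤ a * (a + k * δ) ^ k := prod_add_mul_le ha.le hδ k
      _ ≤ a * (a * (1 + u)) ^ k := by gcongr; linarith
      _ = a ^ (k + 1) * (1 + u) ^ k := by rw [mul_pow, pow_succ]; ring
  rw [abs_sub_comm, abs_of_nonneg (sub_nonneg.mpr (one_div_le_one_div_of_le hq hqP))]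
  calc 1 / a ^ (k + 1) - 1 / P = (P - a ^ (k + 1)) / (a ^ (k + 1) * P) := by
        field_simp
    _ ≤ (P - a ^ (k + 1)) / (a ^ (k + 1) * a ^ (k + 1)) := by
        gcongr
    _ ≤ (a ^ (k + 1) * (1 + u) ^ k - a ^ (k + 1)) / (a ^ (k + 1) * a ^ (k + 1)) := by
        gcongr
    _ = 1 / a ^ (k + 1) * ((1 + u) ^ k - 1) := by
        field_simp
    _ ≤ 1 / a ^ (k + 1) * ((2 * k) ^ k / k.factorial * (u / (1 - u))) := by
        gcongr
        exact one_add_pow_sub_one_le hu0 hu k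

theorem abs_sum_one_div_prod_sub_le {ι : Type*} (s : Finset ι) (a : ι → ℝ) {δ u : ℝ} (k : ℕ)
    (ha : ∀ t ∈ s, 0 < a t) (hδ : 0 ≤ δ) (hu : u < 1) (hkδ : ∀ t ∈ s, k * δ ≤ u * a t) :
    |∑ t ∈ s, 1 / ∏ j ∈ range (k + 1), (a t + j * δ) - ∑ t ∈ s, 1 / a t ^ (k + 1)| ≤
      (∑ t ∈ s, 1 / a t ^ (k + 1)) * ((2 * k) ^ k / k.factorial) * (u / (1 - u)) := by
  rw [← sum_sub_distrib, mul_assoc, sum_mul]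
  exact (abs_sum_le_sum_abs _ _).trans <| sum_le_sum fun t ht =>
    abs_one_div_prod_sub_one_div_pow_le k (ha t ht) hδ hu (hkδ t ht)

theorem finite_difference_moment_error_general
    (n : ℕ) (hn : 0 < n) (lam : Fin n → ℝ) (hlam : Antitone lam)
    (g : ℕ → ℝ → ℝ) (hg : ∀ (m : ℕ) (y : ℝ), g m y = ∑ i, 1 / (y - lam i) ^ m)
    (k : ℕ) (x : ℝ) (hx : lam ⟨0, hn⟩ < x)
    (ξ : ℝ) (hξ : ξ = 1 / (x - lam ⟨0, hn⟩))
    (δ : ℝ) (hδ : 0 < δ) (hsmall : (k : ℝ) * δ * ξ < 1)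
    (h : ℝ) (hh : h = ((-1 : ℝ) ^ k / ((k.factorial : ℝ) * δ ^ k)) *
        ∑ i ∈ Finset.range (k + 1),
          (-1 : ℝ) ^ i * (k.choose i : ℝ) * g 1 (x + ((k - i : ℕ) : ℝ) * δ)) :
    |h - g (k + 1) x| ≤
      g (k + 1) x * ((2 * (k : ℝ)) ^ k / (k.factorial : ℝ)) *
        ((k : ℝ) * δ * ξ / (1 - (k : ℝ) * δ * ξ)) := by
  have hgap : ∀ t, x - lam ⟨0, hn⟩ ≤ x - lam t := fun t =>
    sub_le_sub_left (hlam (Fin.le_def.mpr (Nat.zero_le _))) x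
  have hpos : ∀ t, 0 < x - lam t := fun t => (sub_pos.mpr hx).trans_le (hgap t)
  have hg1 : g 1 = fun y => ∑ t, (y - lam t)⁻¹ := by
    ext y
    simp [hg]
  have hh' : h = ∑ t, 1 / ∏ j ∈ range (k + 1), (x - lam t + j * δ) := by
    rw [hh, ← fwdDiff_iter_eq_sum_shift_rev, hg1,
      fwdDiff_iter_sum_inv_sub _ _ _ _ _ fun t _ j _ => by have := hpos t; positivity, mul_sum]
    refine sum_congr rfl fun t _ => ?_
    have hsign : ((-1 : ℝ) ^ k) ^ 2 = 1 := by
      rw [← pow_mul, mul_comm, pow_mul, neg_one_sq, one_pow]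
    rw [mul_div_assoc']
    congr 1
    field_simp
    exact hsign
  rw [hh', hg]
  refine abs_sum_one_div_prod_sub_le _ _ k (fun t _ => hpos t) hδ.le hsmall fun t _ => ?_
  have hξgap : 1 ≤ ξ * (x - lam t) := by
    rw [hξ, one_div_mul_eq_div, le_div_iff₀ (sub_pos.mpr hx), one_mul]
    exact hgap t
  calc (k : ℝ) * δ ≤ k * δ * (ξ * (x - lam t)) := le_mul_of_one_le_right (by positivity) hξgap
    _ = k * δ * ξ * (x - lam t) := by ring

/-- error bound for the k-th order finite-difference approximation
`h_{k+1}` of the moment function `g_{k+1}` built from exact values of `g₁`. -/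
theorem finite_difference_moment_error
    (n : ℕ) (hn : 0 < n) (lam : Fin n → ℝ) (hlam : Antitone lam)
    (g : ℕ → ℝ → ℝ) (hg : ∀ (m : ℕ) (y : ℝ), g m y = ∑ i, 1 / (y - lam i) ^ m)
    (k : ℕ) (hk : 1 ≤ k) (x : ℝ) (hx : lam ⟨0, hn⟩ < x)
    (ξ : ℝ) (hξ : ξ = 1 / (x - lam ⟨0, hn⟩))
    (δ : ℝ) (hδ : 0 < δ) (hsmall : (k : ℝ) * δ * ξ < 1)
    (h : ℝ) (hh : h = ((-1 : ℝ) ^ k / ((k.factorial : ℝ) * δ ^ k)) *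
        ∑ i ∈ Finset.range (k + 1),
          (-1 : ℝ) ^ i * (k.choose i : ℝ) * g 1 (x + ((k - i : ℕ) : ℝ) * δ)) :
    |h - g (k + 1) x| ≤
      g (k + 1) x * ((2 * (k : ℝ)) ^ k / (k.factorial : ℝ)) *
        ((k : ℝ) * δ * ξ / (1 - (k : ℝ) * δ * ξ)) :=
  finite_difference_moment_error_general n hn lam hlam g hg k x hx ξ hξ δ hδ hsmall h hh
end

section
/- Fix real numbers λ_1 ≥ λ_2 ≥ … ≥ λ_n with n ≥ 1, an integer k ≥ 2, x > λ_1, and define g_m(x) = Σ_{i=1}^n 1/(x − λ_i)^m. Let a, b be real numbers with |a − g_{k−1}(x)| ≤ (1/4)·g_{k−1}(x) and |b − g_k(x)| ≤ (1/4)·g_k(x). Then (x − λ_1)/(8·n^{1/k}) ≤ (1/(4·n^{1/k}))·(a/b) ≤ (x − λ_1)/2. -/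
/-!
Write `yᵢ = 1 / (x − λᵢ)`, so that `0 < yᵢ ≤ y₁ = 1 / (x − λ₁)` and `g_m(x) = ∑ yᵢ ^ m`.
The ratio `g_{k−1}(x) / g_k(x)` lies in `[x − λ₁, n^{1/k} (x − λ₁)]`: the lower bound because
`yᵢ ^ k ≤ y₁ · yᵢ ^ (k−1)`, the upper one by Hölder, `g_{k−1} ≤ n^{1/k} g_k^{(k−1)/k}`, combined
with `g_k^{1/k} ≥ y₁`. Approximating numerator and denominator within a factor `1 ± 1/4` moves the
ratio by a factor in `[3/5, 5/3]`, which the constants `1/8` and `1/2` absorb.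
-/

open Finset

section PowerSums

variable {ι : Type*} (s : Finset ι) {y : ι → ℝ}

theorem sum_pow_succ_le_mul_sum_pow {M : ℝ} (hy : ∀ i ∈ s, 0 ≤ y i) (hyM : ∀ i ∈ s, y i ≤ M)
    (m : ℕ) : ∑ i ∈ s, y i ^ (m + 1) ≤ M * ∑ i ∈ s, y i ^ m := by
  rw [mul_sum]
  refine sum_le_sum fun i hi => ?_
  rw [pow_succ']
  exact mul_le_mul_of_nonneg_right (hyM i hi) (pow_nonneg (hy i hi) m)

theorem sum_pow_le_card_rpow_mul_sum_pow_succ_rpow (hy : ∀ i, 0 ≤ y i) {m : ℕ} (hm : 0 < m) :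
    ∑ i ∈ s, y i ^ m ≤
      (#s : ℝ) ^ ((m + 1 : ℝ)⁻¹) * (∑ i ∈ s, y i ^ (m + 1)) ^ ((m : ℝ) / (m + 1)) := by
  have hm' : (0 : ℝ) < m := by exact_mod_cast hm
  have hp : 1 ≤ ((m : ℝ) + 1) / m := by rw [le_div_iff₀ hm']; linarith
  have holder := Real.inner_le_weight_mul_Lp_of_nonneg s hp (fun _ => 1) (fun i => y i ^ m)
    (fun _ => zero_le_one) (fun i => pow_nonneg (hy i) m)
  have hpow : ∀ i, (y i ^ m) ^ (((m : ℝ) + 1) / m) = y i ^ (m + 1) := fun i => by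
    rw [← Real.rpow_natCast, ← Real.rpow_mul (hy i), mul_div_cancel₀ _ hm'.ne', ← Nat.cast_succ,
      Real.rpow_natCast]
  have hexp : 1 - (m : ℝ) / (m + 1) = ((m : ℝ) + 1)⁻¹ := by field_simp; ring
  simpa only [one_mul, sum_const, nsmul_eq_mul, mul_one, hpow, hexp, inv_div] using holder

theorem sum_pow_le_card_rpow_mul_sum_pow_succ_div {M : ℝ} (hy : ∀ i, 0 ≤ y i) (hM : 0 < M)
    {j : ι} (hj : j ∈ s) (hMj : M ≤ y j) {m : ℕ} (hm : 0 < m) :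
    ∑ i ∈ s, y i ^ m ≤ (#s : ℝ) ^ ((m + 1 : ℝ)⁻¹) * (∑ i ∈ s, y i ^ (m + 1)) / M := by
  set B := ∑ i ∈ s, y i ^ (m + 1)
  have hMB : M ^ (m + 1) ≤ B :=
    (pow_le_pow_left₀ hM.le hMj _).trans (single_le_sum (fun i _ => pow_nonneg (hy i) _) hj)
  have hB : 0 < B := (pow_pos hM _).trans_le hMB
  have hroot : M ≤ B ^ ((m + 1 : ℝ)⁻¹) := by
    rw [Real.le_rpow_inv_iff_of_pos hM.le hB.le (by positivity)]
    exact_mod_cast hMB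
  have hsplit : B ^ ((m : ℝ) / (m + 1)) * B ^ ((m + 1 : ℝ)⁻¹) = B := by
    have hexp : (m : ℝ) / (m + 1) + (m + 1 : ℝ)⁻¹ = 1 := by field_simp
    rw [← Real.rpow_add hB, hexp, Real.rpow_one]
  calc ∑ i ∈ s, y i ^ m ≤ (#s : ℝ) ^ ((m + 1 : ℝ)⁻¹) * B ^ ((m : ℝ) / (m + 1)) :=
        sum_pow_le_card_rpow_mul_sum_pow_succ_rpow s hy hm
    _ ≤ (#s : ℝ) ^ ((m + 1 : ℝ)⁻¹) * B / M := by
        rw [mul_div_assoc]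
        refine mul_le_mul_of_nonneg_left ?_ (by positivity)
        rw [le_div_iff₀ hM]
        calc B ^ ((m : ℝ) / (m + 1)) * M ≤ B ^ ((m : ℝ) / (m + 1)) * B ^ ((m + 1 : ℝ)⁻¹) := by
              gcongr
          _ = B := hsplit

end PowerSums

section Approximation

variable {a b G H ε : ℝ}

theorem div_le_mul_div_of_abs_sub_le (hG : 0 < G) (hH : 0 < H) (hε : ε < 1)
    (ha : |a - G| ≤ ε * G) (hb : |b - H| ≤ ε * H) : a / b ≤ (1 + ε) / (1 - ε) * (G / H) := by
  have hε₀ : 0 ≤ ε := nonneg_of_mul_nonneg_left ((abs_nonneg _).trans ha) hG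
  obtain ⟨-, ha⟩ := abs_le.1 ha
  obtain ⟨hb, -⟩ := abs_le.1 hb
  calc a / b ≤ ((1 + ε) * G) / ((1 - ε) * H) :=
        div_le_div₀ (by nlinarith) (by linarith) (by nlinarith) (by linarith)
    _ = (1 + ε) / (1 - ε) * (G / H) := mul_div_mul_comm _ _ _ _

theorem mul_div_le_div_of_abs_sub_le (hG : 0 < G) (hH : 0 < H) (hε : ε < 1)
    (ha : |a - G| ≤ ε * G) (hb : |b - H| ≤ ε * H) : (1 - ε) / (1 + ε) * (G / H) ≤ a / b := by
  have hε₀ : 0 ≤ ε := nonneg_of_mul_nonneg_left ((abs_nonneg _).trans ha) hG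
  obtain ⟨ha, -⟩ := abs_le.1 ha
  obtain ⟨hb', hb⟩ := abs_le.1 hb
  calc (1 - ε) / (1 + ε) * (G / H) = ((1 - ε) * G) / ((1 + ε) * H) :=
        (mul_div_mul_comm _ _ _ _).symm
    _ ≤ a / b := div_le_div₀ (by nlinarith) (by linarith) (by nlinarith) (by linarith)

end Approximation

section Moments

variable {ι : Type*}

noncomputable def moment [Fintype ι] (lam : ι → ℝ) (m : ℕ) (x : ℝ) : ℝ :=
  ∑ i, 1 / (x - lam i) ^ m

variable {lam : ι → ℝ} {x : ℝ} {i₀ : ι}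

theorem one_div_sub_pos_of_forall_le (hmax : ∀ i, lam i ≤ lam i₀) (hx : lam i₀ < x) (i : ι) :
    0 < 1 / (x - lam i) :=
  one_div_pos.2 (by linarith [hmax i])

theorem one_div_sub_le_of_forall_le (hmax : ∀ i, lam i ≤ lam i₀) (hx : lam i₀ < x) (i : ι) :
    1 / (x - lam i) ≤ 1 / (x - lam i₀) :=
  one_div_le_one_div_of_le (sub_pos.2 hx) (sub_le_sub_left (hmax i) x)

variable [Fintype ι]

theorem moment_eq_sum_pow (m : ℕ) : moment lam m x = ∑ i, (1 / (x - lam i)) ^ m := by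
  simp only [moment, one_div_pow]

theorem moment_pos (hmax : ∀ i, lam i ≤ lam i₀) (hx : lam i₀ < x) (m : ℕ) :
    0 < moment lam m x := by
  rw [moment_eq_sum_pow]
  exact sum_pos (fun i _ => pow_pos (one_div_sub_pos_of_forall_le hmax hx i) m) ⟨i₀, mem_univ _⟩

theorem le_moment_div_moment_succ (hmax : ∀ i, lam i ≤ lam i₀) (hx : lam i₀ < x) (m : ℕ) :
    x - lam i₀ ≤ moment lam m x / moment lam (m + 1) x := by
  have hD : 0 < x - lam i₀ := sub_pos.2 hx
  rw [le_div_iff₀ (moment_pos hmax hx _), ← le_div_iff₀' hD, div_eq_mul_one_div _ (x - lam i₀),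
    mul_comm, moment_eq_sum_pow, moment_eq_sum_pow]
  exact sum_pow_succ_le_mul_sum_pow _ (fun i _ => (one_div_sub_pos_of_forall_le hmax hx i).le)
    (fun i _ => one_div_sub_le_of_forall_le hmax hx i) m

theorem moment_div_moment_succ_le (hmax : ∀ i, lam i ≤ lam i₀) (hx : lam i₀ < x) {m : ℕ}
    (hm : 0 < m) :
    moment lam m x / moment lam (m + 1) x ≤
      (Fintype.card ι : ℝ) ^ ((m + 1 : ℝ)⁻¹) * (x - lam i₀) := by
  have hbound := sum_pow_le_card_rpow_mul_sum_pow_succ_div univ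
    (fun i => (one_div_sub_pos_of_forall_le hmax hx i).le)
    (one_div_sub_pos_of_forall_le hmax hx i₀) (mem_univ i₀) le_rfl hm
  rw [card_univ, div_div_eq_mul_div, div_one, ← moment_eq_sum_pow, ← moment_eq_sum_pow] at hbound
  rw [div_le_iff₀ (moment_pos hmax hx _)]
  linarith

end Moments

/-- the update step built from (1 ± 1/4)-approximations of the moments
satisfies `(x − λ₁)/(8 n^{1/k}) ≤ (1/(4 n^{1/k})) (a/b) ≤ (x − λ₁)/2`. -/
theorem update_step_bounds
    (n : ℕ) (hn : 0 < n) (lam : Fin n → ℝ) (hlam : Antitone lam)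
    (k : ℕ) (hk : 2 ≤ k) (x : ℝ) (hx : lam ⟨0, hn⟩ < x)
    (g : ℕ → ℝ → ℝ) (hg : ∀ (m : ℕ) (y : ℝ), g m y = ∑ i, 1 / (y - lam i) ^ m)
    (a b : ℝ)
    (ha : |a - g (k - 1) x| ≤ (1 / 4) * g (k - 1) x)
    (hb : |b - g k x| ≤ (1 / 4) * g k x) :
    (x - lam ⟨0, hn⟩) / (8 * (n : ℝ) ^ ((1 : ℝ) / k)) ≤
        (1 / (4 * (n : ℝ) ^ ((1 : ℝ) / k))) * (a / b) ∧
      (1 / (4 * (n : ℝ) ^ ((1 : ℝ) / k))) * (a / b) ≤ (x - lam ⟨0, hn⟩) / 2 := by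
  obtain ⟨m, rfl⟩ : ∃ m, k = m + 1 := ⟨k - 1, by omega⟩
  obtain rfl : g = moment lam := funext fun m => funext (hg m)
  rw [Nat.add_sub_cancel] at ha
  have hmax : ∀ i, lam i ≤ lam ⟨0, hn⟩ := fun i => hlam (Nat.zero_le i.val)
  set D := x - lam ⟨0, hn⟩
  set N := (n : ℝ) ^ ((1 : ℝ) / ↑(m + 1))
  have hN : 0 < N := by positivity
  have hG := moment_pos hmax hx m
  have hH := moment_pos hmax hx (m + 1)
  have hratio_ge := le_moment_div_moment_succ hmax hx m
  have hratio_le := moment_div_moment_succ_le hmax hx (by omega : 0 < m)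
  rw [Fintype.card_fin, ← Nat.cast_succ, ← one_div] at hratio_le
  have hab_ge := mul_div_le_div_of_abs_sub_le hG hH (by norm_num) ha hb
  have hab_le := div_le_mul_div_of_abs_sub_le hG hH (by norm_num) ha hb
  norm_num at hab_ge hab_le
  constructor
  · calc D / (8 * N) = 1 / (4 * N) * (D / 2) := by field_simp; ring
      _ ≤ 1 / (4 * N) * (a / b) := by gcongr 1 / (4 * N) * ?_; linarith
  · calc 1 / (4 * N) * (a / b) ≤ 1 / (4 * N) * (5 / 3 * (N * D)) := by
          gcongr 1 / (4 * N) * ?_; linarith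
      _ ≤ D / 2 := by field_simp; linarith
end
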